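/- With notation as in the context: suppose A : G → GL_{N+1}(L) is a family of matrices with φ^σ ≈ φ^{A(σ)} for every σ ∈ G. Then the following are equivalent: (i) there exist a matrix B ∈ GL_{N+1}(L) and a tuple ψ = (ψ_0, …, ψ_N) of polynomials in K[X_0, …, X_N], each homogeneous of degree d, such that φ^B ≈ ψ_L, where ψ_L is the system over L obtained by mapping the coefficients of ψ along the inclusion K → L; (ii) there exists g ∈ GL_{N+1}(L) such that for every σ ∈ G, φ^{(g⁻¹ · σ(g)) · A(σ)⁻¹} ≈ φ. (That is, K is a field of definition for the class of φ if and only if the cocycle σ ↦ A(σ) is a coboundary relative to the stabilizer 𝒜_φ.) -/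

import Mathlib

/-!
Since `σ(φ^{g⁻¹}) = σ(φ)^{σ(g)⁻¹} ≈ φ^{A(σ) σ(g)⁻¹}`, the twisted cocycle `g⁻¹ σ(g) A(σ)⁻¹`
stabilizes `φ` projectively exactly when `φ^{g⁻¹}` is projectively fixed by `σ`. A system
defined over `K` is fixed by every `σ`, which gives (ii) with `g = B⁻¹`. Conversely, rescaling a
projectively Galois-invariant system so that one of its coefficients is `1` makes it honestly
invariant, and its coefficients then lie in `K` because `L / K` is Galois.
-/

/-- The conjugate system `φ^A`: its `i`-th entry is
`∑ⱼ (A⁻¹)ᵢⱼ · φⱼ(A·X)`, where `φⱼ(A·X)` substitutes `Xₖ ↦ ∑ₗ Aₖₗ·Xₗ`. -/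
noncomputable def conjSys {L : Type*} [Field L] {n : ℕ}
    (A : Matrix.GeneralLinearGroup (Fin n) L)
    (φ : Fin n → MvPolynomial (Fin n) L) : Fin n → MvPolynomial (Fin n) L :=
  fun i => ∑ j, MvPolynomial.C ((↑(A⁻¹) : Matrix (Fin n) (Fin n) L) i j) *
    MvPolynomial.aeval
      (fun k => ∑ l, MvPolynomial.C ((↑A : Matrix (Fin n) (Fin n) L) k l) * MvPolynomial.X l)
      (φ j)

/-- Projective equality of systems: `ψ = c·φ` for some nonzero scalar `c`. -/
def projEq {L : Type*} [Field L] {n : ℕ}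
    (φ ψ : Fin n → MvPolynomial (Fin n) L) : Prop :=
  ∃ c : L, c ≠ 0 ∧ ∀ i, ψ i = MvPolynomial.C c * φ i

/-- The system `φ^σ` obtained by applying `σ` to every coefficient. -/
noncomputable def mapSys {L : Type*} [Field L] {n : ℕ} (σ : L →+* L)
    (φ : Fin n → MvPolynomial (Fin n) L) : Fin n → MvPolynomial (Fin n) L :=
  fun i => MvPolynomial.map σ (φ i)

/-- The matrix `σ(A)` obtained by applying `σ` to every entry of `A`. -/
noncomputable def galGL {L : Type*} [Field L] {n : ℕ} (σ : L →+* L)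
    (A : Matrix.GeneralLinearGroup (Fin n) L) : Matrix.GeneralLinearGroup (Fin n) L :=
  Units.map σ.mapMatrix.toMonoidHom A

open MvPolynomial

section Conjugation

variable {L : Type*} [Field L] {n : ℕ}

noncomputable def linearSubst (M : Matrix (Fin n) (Fin n) L) : Fin n → MvPolynomial (Fin n) L :=
  fun k => ∑ l, C (M k l) * X l

lemma conjSys_apply (A : Matrix.GeneralLinearGroup (Fin n) L)
    (φ : Fin n → MvPolynomial (Fin n) L) (i : Fin n) :
    conjSys A φ i =
      ∑ j, C ((↑A⁻¹ : Matrix (Fin n) (Fin n) L) i j) * bind₁ (linearSubst ↑A) (φ j) :=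
  rfl

lemma bind₁_linearSubst_linearSubst (M M' : Matrix (Fin n) (Fin n) L)
    (p : MvPolynomial (Fin n) L) :
    bind₁ (linearSubst M) (bind₁ (linearSubst M') p) = bind₁ (linearSubst (M' * M)) p := by
  rw [bind₁_bind₁]
  congr 2
  funext k
  simp only [linearSubst, map_sum, map_mul, bind₁_C_right, bind₁_X_right, Matrix.mul_apply,
    Finset.mul_sum, Finset.sum_mul, mul_assoc]
  exact Finset.sum_comm

lemma conjSys_mul (A B : Matrix.GeneralLinearGroup (Fin n) L)
    (φ : Fin n → MvPolynomial (Fin n) L) :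
    conjSys B (conjSys A φ) = conjSys (A * B) φ := by
  funext i
  simp only [conjSys_apply, map_sum, map_mul, bind₁_C_right, bind₁_linearSubst_linearSubst,
    Finset.mul_sum, mul_inv_rev, Units.val_mul, Matrix.mul_apply, Finset.sum_mul, mul_assoc]
  exact Finset.sum_comm

lemma conjSys_one (φ : Fin n → MvPolynomial (Fin n) L) : conjSys 1 φ = φ := by
  have : linearSubst (1 : Matrix (Fin n) (Fin n) L) = X := by
    funext k
    simp [linearSubst, Matrix.one_apply]
  funext i
  simp [conjSys_apply, this, Matrix.one_apply]

lemma conjSys_C_mul (A : Matrix.GeneralLinearGroup (Fin n) L)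
    (φ : Fin n → MvPolynomial (Fin n) L) (c : L) :
    conjSys A (fun i => C c * φ i) = fun i => C c * conjSys A φ i := by
  funext i
  simp only [conjSys_apply, map_mul, bind₁_C_right, Finset.mul_sum, mul_left_comm]

lemma conjSys_isHomogeneous {d : ℕ} (A : Matrix.GeneralLinearGroup (Fin n) L)
    {φ : Fin n → MvPolynomial (Fin n) L} (hφ : ∀ i, (φ i).IsHomogeneous d) (i : Fin n) :
    (conjSys A φ i).IsHomogeneous d := by
  have hsubst : ∀ k, (linearSubst (↑A : Matrix (Fin n) (Fin n) L) k).IsHomogeneous 1 :=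
    fun k => IsHomogeneous.sum _ _ _ fun l _ => isHomogeneous_C_mul_X _ _
  refine IsHomogeneous.sum _ _ _ fun j _ => IsHomogeneous.C_mul ?_ _
  have := (hφ j).aeval _ hsubst
  rwa [one_mul] at this

end Conjugation

section ProjectiveEquality

variable {L : Type*} [Field L] {n : ℕ} {φ ψ χ : Fin n → MvPolynomial (Fin n) L}

lemma projEq.refl (φ : Fin n → MvPolynomial (Fin n) L) : projEq φ φ :=
  ⟨1, one_ne_zero, fun i => by rw [C_1, one_mul]⟩

lemma projEq.symm (h : projEq φ ψ) : projEq ψ φ := by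
  obtain ⟨c, hc, h⟩ := h
  refine ⟨c⁻¹, inv_ne_zero hc, fun i => ?_⟩
  rw [h i, ← mul_assoc, ← C_mul, inv_mul_cancel₀ hc, C_1, one_mul]

lemma projEq.trans (h₁ : projEq φ ψ) (h₂ : projEq ψ χ) : projEq φ χ := by
  obtain ⟨c, hc, h₁⟩ := h₁
  obtain ⟨c', hc', h₂⟩ := h₂
  exact ⟨c' * c, mul_ne_zero hc' hc, fun i => by rw [h₂ i, h₁ i, ← mul_assoc, ← C_mul]⟩

lemma projEq.conjSys (A : Matrix.GeneralLinearGroup (Fin n) L) (h : projEq φ ψ) :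
    projEq (conjSys A φ) (conjSys A ψ) := by
  obtain ⟨c, hc, h⟩ := h
  refine ⟨c, hc, fun i => ?_⟩
  rw [show ψ = fun j => C c * φ j from funext h, conjSys_C_mul]

lemma projEq_conjSys_iff (A : Matrix.GeneralLinearGroup (Fin n) L) :
    projEq (conjSys A φ) (conjSys A ψ) ↔ projEq φ ψ := by
  refine ⟨fun h => ?_, projEq.conjSys A⟩
  simpa only [conjSys_mul, mul_inv_cancel, conjSys_one] using h.conjSys A⁻¹

lemma projEq_conjSys_inv_iff (A : Matrix.GeneralLinearGroup (Fin n) L) :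
    projEq (conjSys A⁻¹ φ) φ ↔ projEq (conjSys A φ) φ := by
  rw [← projEq_conjSys_iff A, conjSys_mul, inv_mul_cancel, conjSys_one]
  exact ⟨projEq.symm, projEq.symm⟩

lemma projEq.mapSys (σ : L →+* L) (h : projEq φ ψ) : projEq (mapSys σ φ) (mapSys σ ψ) := by
  obtain ⟨c, hc, h⟩ := h
  refine ⟨σ c, (map_ne_zero σ).mpr hc, fun i => ?_⟩
  change map σ (ψ i) = C (σ c) * map σ (φ i)
  rw [h i, map_mul, map_C]

lemma projEq.isHomogeneous {d : ℕ} (h : projEq φ ψ) (hφ : ∀ i, (φ i).IsHomogeneous d)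
    (i : Fin n) : (ψ i).IsHomogeneous d := by
  obtain ⟨c, -, h⟩ := h
  rw [h i]
  exact (hφ i).C_mul c

end ProjectiveEquality

section GaloisAction

variable {L : Type*} [Field L] {n : ℕ}

lemma map_linearSubst (σ : L →+* L) (M : Matrix (Fin n) (Fin n) L) (k : Fin n) :
    map σ (linearSubst M k) = linearSubst (M.map σ) k := by
  simp [linearSubst, Matrix.map_apply]

lemma galGL_inv (σ : L →+* L) (A : Matrix.GeneralLinearGroup (Fin n) L) :
    galGL σ A⁻¹ = (galGL σ A)⁻¹ :=
  map_inv _ A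

lemma mapSys_conjSys (σ : L →+* L) (A : Matrix.GeneralLinearGroup (Fin n) L)
    (φ : Fin n → MvPolynomial (Fin n) L) :
    mapSys σ (conjSys A φ) = conjSys (galGL σ A) (mapSys σ φ) := by
  funext i
  have hsubst : (fun k => map σ (linearSubst (↑A : Matrix (Fin n) (Fin n) L) k)) =
      linearSubst ↑(galGL σ A) := funext (map_linearSubst σ _)
  simp only [mapSys, conjSys_apply, map_sum, map_mul, map_C, map_bind₁, hsubst, ← galGL_inv]
  rfl

lemma projEq_mapSys_conjSys_inv_iff {σ : L →+* L} {φ : Fin n → MvPolynomial (Fin n) L}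
    {A : Matrix.GeneralLinearGroup (Fin n) L} (hA : projEq (conjSys A φ) (mapSys σ φ))
    (g : Matrix.GeneralLinearGroup (Fin n) L) :
    projEq (mapSys σ (conjSys g⁻¹ φ)) (conjSys g⁻¹ φ) ↔
      projEq (conjSys ((g⁻¹ * galGL σ g) * A⁻¹) φ) φ := by
  have hσ : projEq (conjSys (A * (galGL σ g)⁻¹) φ) (mapSys σ (conjSys g⁻¹ φ)) := by
    rw [mapSys_conjSys, galGL_inv, ← conjSys_mul]
    exact hA.conjSys _
  calc projEq (mapSys σ (conjSys g⁻¹ φ)) (conjSys g⁻¹ φ)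
      ↔ projEq (conjSys (A * (galGL σ g)⁻¹) φ) (conjSys g⁻¹ φ) :=
        ⟨hσ.trans, hσ.symm.trans⟩
    _ ↔ projEq (conjSys (A * (galGL σ g)⁻¹ * g) φ) φ := by
        rw [← projEq_conjSys_iff g, conjSys_mul, conjSys_mul, inv_mul_cancel, conjSys_one]
    _ ↔ projEq (conjSys ((g⁻¹ * galGL σ g) * A⁻¹) φ) φ := by
        rw [← projEq_conjSys_inv_iff, mul_inv_rev, mul_inv_rev, inv_inv, mul_assoc]

end GaloisAction

section Descent

variable {K L : Type*} [Field K] [Field L] [Algebra K L] {n : ℕ}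

lemma mapSys_eq_of_projEq_of_coeff_eq_one {σ : L →+* L} {ψ : Fin n → MvPolynomial (Fin n) L}
    (h : projEq (mapSys σ ψ) ψ) {i : Fin n} {m : Fin n →₀ ℕ} (hm : coeff m (ψ i) = 1) :
    mapSys σ ψ = ψ := by
  obtain ⟨c, -, hc⟩ := h
  have hσm : coeff m (mapSys σ ψ i) = 1 := by rw [mapSys, coeff_map, hm, map_one]
  have hc1 : 1 = c := by simpa [hm, hσm] using congrArg (coeff m) (hc i)
  funext j
  rw [hc j, ← hc1, C_1, one_mul]

lemma mapSys_map_algebraMap (σ : L ≃ₐ[K] L) (ψ : Fin n → MvPolynomial (Fin n) K) :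
    mapSys (σ : L →+* L) (fun i => map (algebraMap K L) (ψ i)) =
      fun i => map (algebraMap K L) (ψ i) := by
  funext i
  rw [mapSys, map_map, show (σ : L →+* L).comp (algebraMap K L) = algebraMap K L from
    RingHom.ext σ.commutes]

lemma exists_map_eq_of_forall_mapSys_eq [IsGalois K L] {ψ : Fin n → MvPolynomial (Fin n) L}
    (h : ∀ σ : L ≃ₐ[K] L, mapSys (σ : L →+* L) ψ = ψ) :
    ∃ ψK : Fin n → MvPolynomial (Fin n) K, ∀ i, map (algebraMap K L) (ψK i) = ψ i := by
  suffices ∀ i, ψ i ∈ Set.range (map (algebraMap K L)) from ⟨fun i => (this i).choose,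
    fun i => (this i).choose_spec⟩
  intro i
  rw [mem_range_map_iff_coeffs_subset]
  intro c hc
  obtain ⟨m, -, rfl⟩ := mem_coeffs_iff.mp hc
  refine (InfiniteGalois.mem_range_algebraMap_iff_fixed _).mpr fun σ => ?_
  simpa [mapSys, coeff_map] using congrArg (fun ψ => coeff m (ψ i)) (h σ)

lemma exists_projEq_map_of_forall_projEq_mapSys [IsGalois K L]
    {ψ : Fin n → MvPolynomial (Fin n) L}
    (h : ∀ σ : L ≃ₐ[K] L, projEq (mapSys (σ : L →+* L) ψ) ψ) :
    ∃ ψK : Fin n → MvPolynomial (Fin n) K, projEq ψ (fun i => map (algebraMap K L) (ψK i)) := by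
  by_cases hψ : ∀ i, ψ i = 0
  · refine ⟨0, ?_⟩
    convert projEq.refl ψ
    simp [hψ]
  obtain ⟨i, hi⟩ := not_forall.mp hψ
  obtain ⟨m, hm⟩ := ne_zero_iff.mp hi
  set ψ₁ : Fin n → MvPolynomial (Fin n) L := fun j => C (coeff m (ψ i))⁻¹ * ψ j
  have hψ₁ : projEq ψ ψ₁ := ⟨_, inv_ne_zero hm, fun j => rfl⟩
  have hm₁ : coeff m (ψ₁ i) = 1 := by simp [ψ₁, coeff_C_mul, hm]
  have hfix : ∀ σ : L ≃ₐ[K] L, mapSys (σ : L →+* L) ψ₁ = ψ₁ := fun σ =>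
    mapSys_eq_of_projEq_of_coeff_eq_one
      (((hψ₁.symm.mapSys _).trans (h σ)).trans hψ₁) hm₁
  obtain ⟨ψK, hψK⟩ := exists_map_eq_of_forall_mapSys_eq hfix
  exact ⟨ψK, by simpa only [hψK] using hψ₁⟩

end Descent

theorem field_of_definition_iff_coboundary_general
    {K L : Type*} [Field K] [Field L] [Algebra K L] [IsSepClosure K L]
    (N d : ℕ)
    (φ : Fin (N + 1) → MvPolynomial (Fin (N + 1)) L)
    (hhom : ∀ i, (φ i).IsHomogeneous d)
    (A : (L ≃ₐ[K] L) → Matrix.GeneralLinearGroup (Fin (N + 1)) L)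
    (hA : ∀ σ : L ≃ₐ[K] L, projEq (conjSys (A σ) φ) (mapSys (σ : L →+* L) φ)) :
    (∃ (B : Matrix.GeneralLinearGroup (Fin (N + 1)) L)
        (ψ : Fin (N + 1) → MvPolynomial (Fin (N + 1)) K),
      (∀ i, (ψ i).IsHomogeneous d) ∧
      projEq (conjSys B φ) (fun i => MvPolynomial.map (algebraMap K L) (ψ i))) ↔
    (∃ g : Matrix.GeneralLinearGroup (Fin (N + 1)) L, ∀ σ : L ≃ₐ[K] L,
      projEq (conjSys ((g⁻¹ * galGL (σ : L →+* L) g) * (A σ)⁻¹) φ) φ) := by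
  constructor
  · rintro ⟨B, ψ, -, hBψ⟩
    refine ⟨B⁻¹, fun σ => (projEq_mapSys_conjSys_inv_iff (hA σ) B⁻¹).mp ?_⟩
    have hσ := hBψ.mapSys (σ : L →+* L)
    rw [mapSys_map_algebraMap] at hσ
    rw [inv_inv]
    exact hσ.trans hBψ.symm
  · rintro ⟨g, hg⟩
    obtain ⟨ψ, hψ⟩ := exists_projEq_map_of_forall_projEq_mapSys fun σ =>
      (projEq_mapSys_conjSys_inv_iff (hA σ) g).mpr (hg σ)
    exact ⟨g⁻¹, ψ, fun i => (hψ.isHomogeneous (conjSys_isHomogeneous g⁻¹ hhom) i).of_map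
      (algebraMap K L).injective, hψ⟩

theorem field_of_definition_iff_coboundary
    {K L : Type*} [Field K] [Field L] [Algebra K L] [IsSepClosure K L]
    (N d : ℕ) (hN : 1 ≤ N) (hd : 1 ≤ d)
    (φ : Fin (N + 1) → MvPolynomial (Fin (N + 1)) L)
    (hhom : ∀ i, (φ i).IsHomogeneous d) (hne : ∃ i, φ i ≠ 0)
    (A : (L ≃ₐ[K] L) → Matrix.GeneralLinearGroup (Fin (N + 1)) L)
    (hA : ∀ σ : L ≃ₐ[K] L, projEq (conjSys (A σ) φ) (mapSys (σ : L →+* L) φ)) :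
    (∃ (B : Matrix.GeneralLinearGroup (Fin (N + 1)) L)
        (ψ : Fin (N + 1) → MvPolynomial (Fin (N + 1)) K),
      (∀ i, (ψ i).IsHomogeneous d) ∧
      projEq (conjSys B φ) (fun i => MvPolynomial.map (algebraMap K L) (ψ i))) ↔
    (∃ g : Matrix.GeneralLinearGroup (Fin (N + 1)) L, ∀ σ : L ≃ₐ[K] L,
      projEq (conjSys ((g⁻¹ * galGL (σ : L →+* L) g) * (A σ)⁻¹) φ) φ) :=
  field_of_definition_iff_coboundary_general N d φ hhom A hA
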